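/- Let G be the time-invariant dynamic Bayesian network DAG of the environment and suppose the joint distribution of the variables satisfies the global Markov condition with respect to G. If the latent component g_{i,t} has no directed path in G to any future reward node r_{t+k} (k > 0), then g_{i,t} is conditionally independent of r_{t+k}, for every k > 0, given the minimal latent state set g_t^min and the action a_t; hence pruning all such components leaves the conditional distribution of every future reward unchanged: P(r_{t+k} | g_t^min, a_t) = P(r_{t+k} | g_t, a_t). -/

import Mathlib

open Relation

/-- Nodes of the time-invariant dynamic Bayesian network: latent state
components `g_{i,t}`, actions `a_t`, and rewards `r_t`. -/
inductive DBNNode (d : ℕ) : Type where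
  | latent (i : Fin d) (t : ℕ)
  | action (t : ℕ)
  | reward (t : ℕ)
deriving DecidableEq

/-- The fixed binary structural masks of the DBN.  `cgg i j = true` encodes the
edge `g_{j,t-1} → g_{i,t}`, `cag i` the edge `a_{t-1} → g_{i,t}`, `cgr i` the
edge `g_{i,t-1} → r_t`, and `car` the edge `a_{t-1} → r_t`. -/
structure DBNMasks (d : ℕ) where
  cgg : Fin d → Fin d → Bool
  cag : Fin d → Bool
  cgr : Fin d → Bool
  car : Bool

/-- The directed edges of the time-invariant DBN graph `G`. -/
def DBNEdge {d : ℕ} (c : DBNMasks d) : DBNNode d → DBNNode d → Prop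
  | .latent j t, .latent i t' => t' = t + 1 ∧ c.cgg i j = true
  | .action t, .latent i t' => t' = t + 1 ∧ c.cag i = true
  | .latent i t, .reward t' => t' = t + 1 ∧ c.cgr i = true
  | .action t, .reward t' => t' = t + 1 ∧ c.car = true
  | _, _ => False

/-- Undirected adjacency induced by a directed edge relation. -/
def Adj {V : Type*} (E : V → V → Prop) (x y : V) : Prop := E x y ∨ E y x

/-- `p` is a (simple, undirected) path in the graph with edge relation `E`:
consecutive nodes are adjacent and no node repeats. -/
def IsPathList {V : Type*} (E : V → V → Prop) (p : List V) : Prop :=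
  p.Chain' (Adj E) ∧ p.Nodup

/-- A path `p` is blocked by the conditioning set `Z`: it contains a
chain `u → m → v` (in either direction) or a fork `u ← m → v` with middle
node `m ∈ Z`, or a collider `u → m ← v` with `m ∉ Z` and no descendant of
`m` in `Z`. -/
def BlockedBy {V : Type*} (E : V → V → Prop) (Z : Set V) (p : List V) : Prop :=
  ∃ u m v : V, [u, m, v] <:+: p ∧
    ((((E u m ∧ E m v) ∨ (E v m ∧ E m u) ∨ (E m u ∧ E m v)) ∧ m ∈ Z) ∨
      ((E u m ∧ E v m) ∧ m ∉ Z ∧ ∀ w : V, Relation.TransGen E m w → w ∉ Z))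

/-- `Z` d-separates `X` from `Y` in the graph with edge relation `E`: every
path between a node of `X` and a node of `Y` is blocked by `Z`. -/
def DSep {V : Type*} (E : V → V → Prop) (X Y Z : Set V) : Prop :=
  ∀ x ∈ X, ∀ y ∈ Y, ∀ p : List V,
    IsPathList E p → p.head? = some x → p.getLast? = some y → BlockedBy E Z p

/-- The joint distribution (represented abstractly by its ternary conditional
independence relation `CI X Y Z`, "X ⫫ Y given Z") satisfies the global Markov
condition w.r.t. the graph: d-separation implies conditional independence. -/
def GlobalMarkov {V : Type*} (E : V → V → Prop)
    (CI : Set V → Set V → Set V → Prop) : Prop :=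
  ∀ X Y Z : Set V, Disjoint X Y → Disjoint X Z → Disjoint Y Z →
    DSep E X Y Z → CI X Y Z

/-- The joint distribution is faithful to the graph: every conditional
independence corresponds to a d-separation. -/
def FaithfulTo {V : Type*} (E : V → V → Prop)
    (CI : Set V → Set V → Set V → Prop) : Prop :=
  ∀ X Y Z : Set V, Disjoint X Y → Disjoint X Z → Disjoint Y Z →
    CI X Y Z → DSep E X Y Z

/-- `g_{i,t} ∈ g_t^min` iff `c_i^{g→r} = 1` or `g_{i,t}` has a directed path in
`G` to a future reward `r_{t+k}` (some `k > 0`) passing through other latent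
state components. -/
def InMinSet {d : ℕ} (c : DBNMasks d) (i : Fin d) (t : ℕ) : Prop :=
  c.cgr i = true ∨
    ∃ k : ℕ, 0 < k ∧ ∃ (j : Fin d) (s : ℕ),
      Relation.TransGen (DBNEdge c) (DBNNode.latent i t) (DBNNode.latent j s) ∧
      Relation.TransGen (DBNEdge c) (DBNNode.latent j s) (DBNNode.reward (t + k))

/-- The minimal latent state set `g_t^min`, as a set of nodes of `G`. -/
def MinSet {d : ℕ} (c : DBNMasks d) (t : ℕ) : Set (DBNNode d) :=
  {n | ∃ i : Fin d, n = DBNNode.latent i t ∧ InMinSet c i t}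

/-! Every edge of the network raises the time index by exactly one, so a path from `g_{i,t}`
to `r_{t+k}` has to step from time `t` to time `t + 1` somewhere. If it later turns back down,
it contains a collider above time `t`; the conditioning set `g_t^min ∪ {a_t}` lives at time `t`,
so neither the collider nor any of its descendants is in it. Otherwise the path runs directed
from a time-`t` node `m` to the reward. Then `m ≠ g_{i,t}`, so `m` is the middle of a chain or a
fork on the path, and `m` is conditioned on: a time-`t` ancestor of a reward is either `a_t` or
lies in `g_t^min`. The argument applies verbatim to every pruned component of `g_t`, and
d-separation is symmetric, which gives the second claim. -/

open List

section Separation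

variable {V : Type*} {E : V → V → Prop} {Z : Set V}

theorem BlockedBy.cons {l : List V} (h : BlockedBy E Z l) (a : V) : BlockedBy E Z (a :: l) :=
  let ⟨u, m, v, hinf, hblock⟩ := h
  ⟨u, m, v, hinf.trans (infix_cons (infix_refl l)), hblock⟩

theorem BlockedBy.of_reverse {l : List V} (h : BlockedBy E Z l.reverse) : BlockedBy E Z l := by
  obtain ⟨u, m, v, hinf, hblock⟩ := h
  refine ⟨v, m, u, reverse_infix.mp (by simpa using hinf), ?_⟩
  tauto

theorem IsPathList.reverse {p : List V} (h : IsPathList E p) : IsPathList E p.reverse :=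
  ⟨isChain_reverse.mpr (h.1.imp fun _ _ hadj => Or.symm hadj), nodup_reverse.mpr h.2⟩

theorem DSep.symm {X Y : Set V} (h : DSep E X Y Z) : DSep E Y X Z :=
  fun y hy x hx p hp hhead hlast =>
    .of_reverse (h x hx y hy p.reverse hp.reverse (by rwa [head?_reverse])
      (by rwa [getLast?_reverse]))

end Separation

section Graded

variable {V : Type*} {E : V → V → Prop} {Z : Set V} {τ : V → ℕ}

theorem level_lt_of_transGen (hτ : ∀ ⦃u v⦄, E u v → τ v = τ u + 1) {u v : V}
    (h : TransGen E u v) : τ u < τ v := by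
  induction h with
  | single h => have := hτ h; omega
  | tail _ h ih => have := hτ h; omega

theorem transGen_or_collider (hτ : ∀ ⦃u v⦄, E u v → τ v = τ u + 1) {y : V} :
    ∀ (q : List V) (a b : V), E a b → IsChain (Adj E) (b :: q) → (b :: q).getLast? = some y →
      TransGen E a y ∨
        ∃ u m v, [u, m, v] <:+: a :: b :: q ∧ E u m ∧ E v m ∧ τ a < τ m
  | [], a, b, hab, _, hlast => by
    obtain rfl : b = y := by simpa using hlast
    exact .inl (.single hab)
  | v :: q, a, b, hab, hchain, hlast => by
    rw [getLast?_cons_cons] at hlast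
    obtain ⟨hbv | hvb, hchain⟩ := isChain_cons_cons.mp hchain
    · obtain hdir | ⟨u, m, w, hinf, hum, hwm, hlevel⟩ :=
        transGen_or_collider hτ q b v hbv hchain hlast
      · exact .inl (.head hab hdir)
      · have := hτ hab
        exact .inr ⟨u, m, w, hinf.trans (infix_cons (infix_refl _)), hum, hwm, by omega⟩
    · have := hτ hab
      exact .inr ⟨a, b, v, ⟨[], q, rfl⟩, hab, hvb, by omega⟩

theorem blockedBy_of_collider (hτ : ∀ ⦃u v⦄, E u v → τ v = τ u + 1) {t : ℕ}
    (hZ : ∀ z ∈ Z, τ z ≤ t) {p : List V} {u m v : V} (hinf : [u, m, v] <:+: p)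
    (hum : E u m) (hvm : E v m) (hm : t < τ m) : BlockedBy E Z p := by
  have hnotZ : ∀ w, t < τ w → w ∉ Z := fun w hw hwZ => by have := hZ w hwZ; omega
  exact ⟨u, m, v, hinf, .inr ⟨⟨hum, hvm⟩, hnotZ m hm,
    fun w hw => hnotZ w (hm.trans (level_lt_of_transGen hτ hw))⟩⟩

theorem blockedBy_or_transGen (hτ : ∀ ⦃u v⦄, E u v → τ v = τ u + 1) {t : ℕ} {y : V}
    (hZ : ∀ z ∈ Z, τ z ≤ t) (hanc : ∀ m, τ m = t → TransGen E m y → m ∈ Z) (hy : t < τ y) :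
    ∀ (p : List V) (b : V), IsChain (Adj E) (b :: p) → τ b ≤ t → (b :: p).getLast? = some y →
      BlockedBy E Z (b :: p) ∨ (τ b = t ∧ TransGen E b y ∧ ∃ v q, p = v :: q ∧ E b v)
  | [], b, _, hb, hlast => by
    obtain rfl : b = y := by simpa using hlast
    omega
  | v :: q, b, hchain, hb, hlast => by
    rw [getLast?_cons_cons] at hlast
    obtain ⟨hbv | hvb, hchain⟩ := isChain_cons_cons.mp hchain
    · have hv := hτ hbv
      by_cases hvt : τ v ≤ t
      · obtain hblock | ⟨hvt, hdir, w, q', rfl, hvw⟩ :=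
          blockedBy_or_transGen hτ hZ hanc hy q v hchain hvt hlast
        · exact .inl (hblock.cons b)
        · exact .inl ⟨b, v, w, ⟨[], q', rfl⟩, .inl ⟨.inl ⟨hbv, hvw⟩, hanc v hvt hdir⟩⟩
      · obtain hdir | ⟨u, m, w, hinf, hum, hwm, hlevel⟩ :=
          transGen_or_collider hτ q b v hbv hchain hlast
        · exact .inr ⟨by omega, hdir, v, q, rfl, hbv⟩
        · exact .inl (blockedBy_of_collider hτ hZ hinf hum hwm (by omega))
    · have hb' := hτ hvb
      obtain hblock | ⟨hvt, hdir, w, q', rfl, hvw⟩ :=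
        blockedBy_or_transGen hτ hZ hanc hy q v hchain (by omega) hlast
      · exact .inl (hblock.cons b)
      · exact .inl ⟨b, v, w, ⟨[], q', rfl⟩, .inl ⟨.inr (.inr ⟨hvb, hvw⟩), hanc v hvt hdir⟩⟩

theorem dsep_of_graded (hτ : ∀ ⦃u v⦄, E u v → τ v = τ u + 1) {t : ℕ} {X : Set V} {y : V}
    (hZ : ∀ z ∈ Z, τ z ≤ t) (hanc : ∀ m, τ m = t → TransGen E m y → m ∈ Z) (hy : t < τ y)
    (hX : ∀ x ∈ X, τ x ≤ t ∧ ¬ TransGen E x y) : DSep E X {y} Z := by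
  rintro x hx _ rfl (_ | ⟨b, p⟩) hp hhead hlast
  · simp at hhead
  obtain rfl : b = x := by simpa using hhead
  obtain ⟨hxt, hx⟩ := hX b hx
  obtain hblock | ⟨-, hdir, -⟩ := blockedBy_or_transGen hτ hZ hanc hy p b hp.1 hxt hlast
  · exact hblock
  · exact absurd hdir hx

end Graded

namespace DBNNode

variable {d : ℕ} {c : DBNMasks d}

def time : DBNNode d → ℕ
  | latent _ t => t
  | action t => t
  | reward t => t

theorem time_eq_of_edge ⦃u v : DBNNode d⦄ (h : DBNEdge c u v) : v.time = u.time + 1 := by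
  cases u <;> cases v <;> first | exact h.elim | exact h.1

theorem not_transGen_reward {s : ℕ} {v : DBNNode d} : ¬ TransGen (DBNEdge c) (reward s) v := by
  intro h
  obtain ⟨b, hb, -⟩ := TransGen.head'_iff.mp h
  cases b <;> exact hb

theorem not_transGen_action {s : ℕ} {u : DBNNode d} : ¬ TransGen (DBNEdge c) u (action s) := by
  intro h
  obtain ⟨b, -, hb⟩ := TransGen.tail'_iff.mp h
  cases b <;> exact hb

end DBNNode

open DBNNode

theorem inMinSet_iff {d : ℕ} {c : DBNMasks d} {i : Fin d} {t : ℕ} :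
    InMinSet c i t ↔ ∃ k, 0 < k ∧ TransGen (DBNEdge c) (latent i t) (reward (t + k)) := by
  constructor
  · rintro (hedge | ⟨k, hk, j, s, hij, hjr⟩)
    · exact ⟨1, one_pos, .single ⟨rfl, hedge⟩⟩
    · exact ⟨k, hk, hij.trans hjr⟩
  · rintro ⟨k, hk, h⟩
    obtain ⟨b, hib, hbr⟩ := TransGen.tail'_iff.mp h
    rcases reflTransGen_iff_eq_or_transGen.mp hib with rfl | hib
    · exact .inl hbr.2
    · cases b with
      | latent j s => exact .inr ⟨k, hk, j, s, hib, .single hbr⟩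
      | action s => exact absurd hib not_transGen_action
      | reward s => exact hbr.elim

def prunedSet {d : ℕ} (c : DBNMasks d) (t : ℕ) : Set (DBNNode d) :=
  {n | ∃ j : Fin d, n = latent j t ∧ ¬ InMinSet c j t}

section Pruning

variable {d : ℕ} {c : DBNMasks d} {t : ℕ}

theorem time_of_mem_minSet_union_action {n : DBNNode d}
    (h : n ∈ MinSet c t ∪ {action t}) : n.time = t := by
  obtain ⟨i, rfl, -⟩ | rfl := h <;> rfl

theorem latent_mem_minSet_union_action_iff {j : Fin d} :
    latent j t ∈ MinSet c t ∪ {action t} ↔ InMinSet c j t := by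
  simp [MinSet]

theorem disjoint_prunedSet_minSet_union_action :
    Disjoint (prunedSet c t) (MinSet c t ∪ {action t}) :=
  Set.disjoint_left.mpr fun _ ⟨_, hn, hj⟩ hmem =>
    hj (latent_mem_minSet_union_action_iff.mp (hn ▸ hmem))

theorem disjoint_prunedSet_reward {s : ℕ} : Disjoint (prunedSet c t) {reward s} :=
  Set.disjoint_singleton_right.mpr fun ⟨_, hn, _⟩ => by cases hn

theorem disjoint_reward_minSet_union_action {k : ℕ} (hk : 0 < k) :
    Disjoint {reward (t + k)} (MinSet c t ∪ {action t}) :=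
  Set.disjoint_singleton_left.mpr fun h => by
    have : t + k = t := time_of_mem_minSet_union_action h
    omega

theorem dsep_prunedSet_reward {X : Set (DBNNode d)} (hX : X ⊆ prunedSet c t) {k : ℕ}
    (hk : 0 < k) : DSep (DBNEdge c) X {reward (t + k)} (MinSet c t ∪ {action t}) := by
  apply dsep_of_graded time_eq_of_edge
  · exact fun _ hz => (time_of_mem_minSet_union_action hz).le
  · rintro (j | s | s) hm hdir <;> simp only [time] at hm <;> subst hm
    · exact latent_mem_minSet_union_action_iff.mpr (inMinSet_iff.mpr ⟨k, hk, hdir⟩)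
    · exact .inr rfl
    · exact absurd hdir not_transGen_reward
  · simpa [time] using hk
  · intro x hx
    obtain ⟨j, rfl, hj⟩ := hX hx
    exact ⟨le_rfl, fun hdir => hj (inMinSet_iff.mpr ⟨k, hk, hdir⟩)⟩

end Pruning

/-- Under the global Markov condition, a latent component with no directed path
to any future reward is conditionally independent of every future reward
`r_{t+k}` given `g_t^min` and `a_t`; hence pruning all such components leaves
the conditional distribution of every future reward unchanged, i.e. each
future reward is conditionally independent of the whole set of pruned
components given `g_t^min` and `a_t`. -/
theorem ci_of_no_directed_path_to_future_reward (d : ℕ) (c : DBNMasks d)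
    (CI : Set (DBNNode d) → Set (DBNNode d) → Set (DBNNode d) → Prop)
    (hMarkov : GlobalMarkov (DBNEdge c) CI) (i : Fin d) (t : ℕ)
    (hNoPath : ∀ k : ℕ, 0 < k →
      ¬ Relation.TransGen (DBNEdge c) (DBNNode.latent i t) (DBNNode.reward (t + k))) :
    (∀ k : ℕ, 0 < k →
      CI {DBNNode.latent i t} {DBNNode.reward (t + k)}
        (MinSet c t ∪ {DBNNode.action t})) ∧
    (∀ k : ℕ, 0 < k →
      CI {DBNNode.reward (t + k)}
        {n : DBNNode d | ∃ j : Fin d, n = DBNNode.latent j t ∧ ¬ InMinSet c j t}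
        (MinSet c t ∪ {DBNNode.action t})) := by
  have hi : {latent i t} ⊆ prunedSet c t := Set.singleton_subset_iff.mpr
    ⟨i, rfl, fun hmin => let ⟨k, hk, hdir⟩ := inMinSet_iff.mp hmin; hNoPath k hk hdir⟩
  refine ⟨fun k hk => ?_, fun k hk => ?_⟩
  · exact hMarkov _ _ _ (disjoint_prunedSet_reward.mono_left hi)
      (disjoint_prunedSet_minSet_union_action.mono_left hi)
      (disjoint_reward_minSet_union_action hk) (dsep_prunedSet_reward hi hk)
  · exact hMarkov _ _ _ disjoint_prunedSet_reward.symm (disjoint_reward_minSet_union_action hk)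
      disjoint_prunedSet_minSet_union_action (dsep_prunedSet_reward subset_rfl hk).symm
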